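/- arXiv:1404.1531 — 2 statements merged into one kernel-verified Lean document; each statement's English description precedes it below -/
import Mathlib

section
/- Skolem satisfiability characterizes ordinary satisfiability of a prenex formula: a structure M with assignment α satisfies a formula of the form Qψ, where Q is a quantification prefix, if and only if there exists a Skolem map s for Q over the domain of M such that M, α' ⊨ ψ for every extension α' of α whose restriction to the variables of Q lies in the range of s. -/
/-! By induction on the prefix, a Skolem map is assembled from the witnesses chosen by the
Tarskian semantics: for `∃ x` the chosen value becomes the constant value of `x`, for `∀ x`
the Skolem maps of the tail, one for each value of `x`, are glued along that value. Conversely,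
a Skolem map yields a witness for `∃ x` (its value at `x` depends on no variable), and for
`∀ x` it specializes to a Skolem map of the tail by fixing `x`. The range condition on the
assignments `α'` is the same as asking `S` of `α` overwritten on the variables of `Q` by any
value of `s`. -/

/-- A quantification prefix is a list of quantifications: `(true, v)` stands
for `∃ v` and `(false, v)` for `∀ v`. -/
abbrev QPrefix (V : Type*) := List (Bool × V)

/-- Tarskian evaluation of a prenex formula `Q ψ`, where the matrix `ψ` is
given semantically as a predicate `S` on (total) assignments. -/
def evalPrefix {V D : Type*} [DecidableEq V] (S : (V → D) → Prop) :
    QPrefix V → (V → D) → Prop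
  | [], α => S α
  | (true, x) :: Q, α => ∃ d : D, evalPrefix S Q (Function.update α x d)
  | (false, x) :: Q, α => ∀ d : D, evalPrefix S Q (Function.update α x d)

/-- `Dep Q u v`: the universal variable `u` occurs before the existential
variable `v` in the prefix `Q` (functional dependence). -/
def Dep {V : Type*} (Q : QPrefix V) (u v : V) : Prop :=
  ∃ l₁ l₂ l₃ : QPrefix V, Q = l₁ ++ (false, u) :: l₂ ++ (true, v) :: l₃

/-- `s` is a Skolem map for the prefix `Q` over `D`: it is the identity on
universal variables and the value of each existential variable depends only on
the universal variables it functionally depends upon. -/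
def IsSkolemMap {V D : Type*} (Q : QPrefix V) (s : (V → D) → (V → D)) : Prop :=
  (∀ α : V → D, ∀ x, (false, x) ∈ Q → s α x = α x) ∧
  (∀ α₁ α₂ : V → D, ∀ x, (true, x) ∈ Q →
    (∀ u, Dep Q u x → α₁ u = α₂ u) → s α₁ x = s α₂ x)



section

variable {V D : Type*}

lemma ne_of_mem_of_not_mem_map_snd {Q : QPrefix V} {b : Bool} {x y : V} (hy : (b, y) ∈ Q)
    (hx : x ∉ Q.map Prod.snd) : y ≠ x :=
  ne_of_mem_of_not_mem (List.mem_map_of_mem (f := Prod.snd) hy) hx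

lemma Dep.mem_right {Q : QPrefix V} {u v : V} (h : Dep Q u v) : (true, v) ∈ Q := by
  obtain ⟨l₁, l₂, l₃, rfl⟩ := h
  simp

lemma Dep.cons {Q : QPrefix V} {u v : V} (h : Dep Q u v) (q : Bool × V) : Dep (q :: Q) u v := by
  obtain ⟨l₁, l₂, l₃, rfl⟩ := h
  exact ⟨q :: l₁, l₂, l₃, rfl⟩

lemma dep_cons_true {Q : QPrefix V} {x u v : V} :
    Dep ((true, x) :: Q) u v ↔ Dep Q u v := by
  refine ⟨?_, fun h => h.cons _⟩
  rintro ⟨_ | ⟨_, l₁⟩, l₂, l₃, h⟩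
  · simp at h
  · exact ⟨l₁, l₂, l₃, (List.cons.inj h).2⟩

lemma dep_cons_false {Q : QPrefix V} {x u v : V} :
    Dep ((false, x) :: Q) u v ↔ u = x ∧ (true, v) ∈ Q ∨ Dep Q u v := by
  constructor
  · rintro ⟨_ | ⟨_, l₁⟩, l₂, l₃, h⟩
    · simp only [List.nil_append, List.cons_append, List.cons.injEq, Prod.mk.injEq] at h
      obtain ⟨⟨-, rfl⟩, rfl⟩ := h
      exact Or.inl ⟨rfl, by simp⟩
    · exact Or.inr ⟨l₁, l₂, l₃, (List.cons.inj h).2⟩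
  · rintro (⟨rfl, hv⟩ | h)
    · obtain ⟨l₂, l₃, rfl⟩ := List.append_of_mem hv
      exact ⟨[], l₂, l₃, rfl⟩
    · exact h.cons _

namespace IsSkolemMap

variable {Q : QPrefix V} {x : V} {s : (V → D) → V → D}

lemma of_cons_true (hs : IsSkolemMap ((true, x) :: Q) s) : IsSkolemMap Q s :=
  ⟨fun β y hy => hs.1 β y (List.mem_cons_of_mem _ hy),
    fun β₁ β₂ y hy hdep => hs.2 β₁ β₂ y (List.mem_cons_of_mem _ hy)
      fun u hu => hdep u (dep_cons_true.1 hu)⟩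

/-- No universal variable precedes the leading existential variable, so its value is constant. -/
lemma apply_eq_of_cons_true (hx : x ∉ Q.map Prod.snd) (hs : IsSkolemMap ((true, x) :: Q) s)
    (β₁ β₂ : V → D) : s β₁ x = s β₂ x :=
  hs.2 β₁ β₂ x List.mem_cons_self fun _ hu =>
    (ne_of_mem_of_not_mem_map_snd (dep_cons_true.1 hu).mem_right hx rfl).elim

end IsSkolemMap

section DecidableEq

variable [DecidableEq V]

open Function

def assignVars (Q : QPrefix V) (f α : V → D) : V → D :=
  fun y => if y ∈ Q.map Prod.snd then f y else α y

@[simp]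
lemma assignVars_nil (f α : V → D) : assignVars [] f α = α := rfl

lemma assignVars_cons (b : Bool) (x : V) (Q : QPrefix V) (f α : V → D) :
    assignVars ((b, x) :: Q) f α = assignVars Q f (update α x (f x)) := by
  funext y
  by_cases hy : y = x
  · subst hy
    simp [assignVars]
  · simp [assignVars, hy]

lemma assignVars_update_of_not_mem {Q : QPrefix V} {x : V} (hx : x ∉ Q.map Prod.snd)
    (f α : V → D) (d : D) : assignVars Q (update f x d) α = assignVars Q f α := by
  funext y
  unfold assignVars
  split_ifs with hy
  · exact update_of_ne (ne_of_mem_of_not_mem hy hx) _ _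
  · rfl

lemma forall_extension_iff_forall_assignVars (Q : QPrefix V) (S : (V → D) → Prop)
    (f : (V → D) → V → D) (α : V → D) :
    (∀ α' : V → D, (∀ x, (∀ b, (b, x) ∉ Q) → α' x = α x) →
      (∃ α₀ : V → D, ∀ b x, (b, x) ∈ Q → α' x = f α₀ x) → S α') ↔
    ∀ α₀, S (assignVars Q (f α₀) α) := by
  constructor
  · intro h α₀
    refine h _ (fun x hx => ?_) ⟨α₀, fun b x hx => ?_⟩
    · simp [assignVars, hx]
    · simp [assignVars, List.mem_map_of_mem (f := Prod.snd) hx]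
  · rintro h α' hout ⟨α₀, hin⟩
    convert h α₀ using 1
    funext y
    unfold assignVars
    split_ifs with hy
    · obtain ⟨⟨b, y⟩, hby, rfl⟩ := List.mem_map.1 hy
      exact hin b y hby
    · exact hout y fun b hb => hy (List.mem_map_of_mem (f := Prod.snd) hb)

namespace IsSkolemMap

variable {Q : QPrefix V} {x : V} {s : (V → D) → V → D}

lemma cons_true (hx : x ∉ Q.map Prod.snd) (hs : IsSkolemMap Q s) (d : D) :
    IsSkolemMap ((true, x) :: Q) fun β => update (s β) x d := by
  constructor
  · intro β y hy
    dsimp only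
    rcases List.mem_cons.1 hy with h | h
    · simp at h
    · rw [update_of_ne (ne_of_mem_of_not_mem_map_snd h hx), hs.1 β y h]
  · intro β₁ β₂ y hy hdep
    dsimp only
    rcases List.mem_cons.1 hy with h | h
    · obtain rfl : y = x := (Prod.mk.inj h).2
      simp
    · simp only [update_of_ne (ne_of_mem_of_not_mem_map_snd h hx)]
      exact hs.2 β₁ β₂ y h fun u hu => hdep u (dep_cons_true.2 hu)

lemma cons_false (hx : x ∉ Q.map Prod.snd) {s : D → (V → D) → V → D}
    (hs : ∀ d, IsSkolemMap Q (s d)) :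
    IsSkolemMap ((false, x) :: Q) fun β => update (s (β x) β) x (β x) := by
  constructor
  · intro β y hy
    dsimp only
    rcases List.mem_cons.1 hy with h | h
    · obtain rfl : y = x := (Prod.mk.inj h).2
      simp
    · rw [update_of_ne (ne_of_mem_of_not_mem_map_snd h hx), (hs _).1 β y h]
  · intro β₁ β₂ y hy hdep
    dsimp only
    rcases List.mem_cons.1 hy with h | h
    · simp at h
    · have hβx : β₁ x = β₂ x := hdep x (dep_cons_false.2 (Or.inl ⟨rfl, h⟩))
      simp only [update_of_ne (ne_of_mem_of_not_mem_map_snd h hx), hβx]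
      exact (hs _).2 β₁ β₂ y h fun u hu => hdep u (hu.cons _)

lemma comp_update (hx : x ∉ Q.map Prod.snd) (hs : IsSkolemMap ((false, x) :: Q) s) (d : D) :
    IsSkolemMap Q fun β => s (update β x d) := by
  constructor
  · intro β y hy
    dsimp only
    rw [hs.1 _ y (List.mem_cons_of_mem _ hy), update_of_ne (ne_of_mem_of_not_mem_map_snd hy hx)]
  · intro β₁ β₂ y hy hdep
    refine hs.2 _ _ y (List.mem_cons_of_mem _ hy) fun u hu => ?_
    by_cases hux : u = x
    · subst hux
      simp
    · simp only [update_of_ne hux]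
      exact hdep u ((dep_cons_false.1 hu).resolve_left fun h => hux h.1)

end IsSkolemMap

theorem evalPrefix_iff_exists_isSkolemMap {Q : QPrefix V} (hQ : (Q.map Prod.snd).Nodup)
    (S : (V → D) → Prop) (α : V → D) :
    evalPrefix S Q α ↔
      ∃ s : (V → D) → V → D, IsSkolemMap Q s ∧ ∀ α₀, S (assignVars Q (s α₀) α) := by
  induction Q generalizing α with
  | nil =>
    simp only [evalPrefix, assignVars_nil]
    exact ⟨fun h => ⟨id, ⟨by simp, by simp⟩, fun _ => h⟩, fun ⟨_, _, h⟩ => h α⟩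
  | cons q Q ih =>
    obtain ⟨b, x⟩ := q
    rw [List.map_cons, List.nodup_cons] at hQ
    obtain ⟨hx, hQ⟩ := hQ
    cases b with
    | true =>
      simp only [evalPrefix, ih hQ]
      constructor
      · rintro ⟨d, s, hs, hS⟩
        refine ⟨_, hs.cons_true hx d, fun α₀ => ?_⟩
        simpa [assignVars_cons, assignVars_update_of_not_mem hx] using hS α₀
      · rintro ⟨s, hs, hS⟩
        refine ⟨s α x, s, hs.of_cons_true, fun α₀ => ?_⟩
        simpa [assignVars_cons, hs.apply_eq_of_cons_true hx α₀ α] using hS α₀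
    | false =>
      simp only [evalPrefix, ih hQ]
      constructor
      · intro h
        choose s hs hS using h
        refine ⟨_, IsSkolemMap.cons_false hx hs, fun α₀ => ?_⟩
        simpa [assignVars_cons, assignVars_update_of_not_mem hx] using hS (α₀ x) α₀
      · rintro ⟨s, hs, hS⟩ d
        refine ⟨_, hs.comp_update hx d, fun α₀ => ?_⟩
        have hsx : s (update α₀ x d) x = d := by
          rw [hs.1 _ x List.mem_cons_self, update_self]
        simpa [assignVars_cons, hsx] using hS (update α₀ x d)

end DecidableEq

end

theorem stmt_6_general {V D : Type*} [DecidableEq V]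
    (Q : QPrefix V) (hnodup : (Q.map Prod.snd).Nodup)
    (S : (V → D) → Prop) (α : V → D) :
    evalPrefix S Q α ↔
      ∃ s : (V → D) → (V → D), IsSkolemMap Q s ∧
        ∀ α' : V → D,
          (∀ x, (∀ b, (b, x) ∉ Q) → α' x = α x) →
          (∃ α₀ : V → D, ∀ b x, (b, x) ∈ Q → α' x = s α₀ x) →
          S α' := by
  simp only [evalPrefix_iff_exists_isSkolemMap hnodup, forall_extension_iff_forall_assignVars]

/-- Skolem satisfiability characterizes ordinary satisfiability of a prenex
formula `Q ψ`. -/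
theorem stmt_6 {V D : Type*} [DecidableEq V] [Nonempty D]
    (Q : QPrefix V) (hnodup : (Q.map Prod.snd).Nodup)
    (S : (V → D) → Prop) (α : V → D) :
    evalPrefix S Q α ↔
      ∃ s : (V → D) → (V → D), IsSkolemMap Q s ∧
        ∀ α' : V → D,
          (∀ x, (∀ b, (b, x) ∉ Q) → α' x = α x) →
          (∃ α₀ : V → D, ∀ b x, (b, x) ∈ Q → α' x = s α₀ x) →
          S α' :=
  stmt_6_general Q hnodup S α
end

section
/- One-binding bisimulation implies satisfaction-invariance for atomic one-binding sentences: if R is a one-binding bisimulation between structures M₁ and M₂ over the same signature, then for every quantification prefix Q and binding prefix β over the arguments of a relation symbol r, M₁ ⊨ Qβr iff M₂ ⊨ Qβr. -/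
open Classical in
/-- `ar[A' ↦ d]`: the partial assignment extending `ar` by giving every
argument in `A'` the value `d`. -/
noncomputable def extAsg {Arg D : Type*} (ar : Arg → Option D) (A' : Set Arg) (d : D) :
    Arg → Option D :=
  fun a => if a ∈ A' then some d else ar a

/-- One-binding bisimulation between two structures (partial assignments are
represented as `Arg → Option D`, their domain being the arguments where they
are defined). -/
def OneBindingBisim {Arg Rel D₁ D₂ : Type*} (arg : Rel → Set Arg)
    (interp₁ : Rel → Set (Arg → Option D₁)) (interp₂ : Rel → Set (Arg → Option D₂))
    (R : (Arg → Option D₁) → (Arg → Option D₂) → Prop) : Prop :=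
  R (fun _ => none) (fun _ => none) ∧
  (∀ ar₁ ar₂, R ar₁ ar₂ → ∀ a, (ar₁ a).isSome ↔ (ar₂ a).isSome) ∧
  (∀ ar₁ ar₂ (A' : Set Arg), R ar₁ ar₂ → (∀ a ∈ A', ar₁ a = none) →
    (∀ d₁ : D₁, ∃ d₂ : D₂, R (extAsg ar₁ A' d₁) (extAsg ar₂ A' d₂)) ∧
    (∀ d₂ : D₂, ∃ d₁ : D₁, R (extAsg ar₁ A' d₁) (extAsg ar₂ A' d₂))) ∧
  (∀ (r : Rel) ar₁ ar₂, R ar₁ ar₂ → (∀ a, (ar₁ a).isSome ↔ a ∈ arg r) →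
    (ar₁ ∈ interp₁ r ↔ ar₂ ∈ interp₂ r))

/-! Induct on the quantifier prefix, keeping the partial assignments that `β` induces on the
already quantified variables related by `R`. Quantifying `x` extends both of them by one value on
the set of arguments bound to `x`, which is exactly a one-binding step, so forth/back provides the
matching witness. Once every variable is quantified the two assignments are defined exactly on
`arg r`, where `R` respects the interpretation of `r`. -/

open Classical in
noncomputable def bindAsg {Arg V D : Type*} (β : Arg → Option V) (W : Set V) (α : V → D) :
    Arg → Option D :=
  fun a => (β a).bind fun v => if v ∈ W then some (α v) else none

section bindAsg

variable {Arg V D : Type*} (β : Arg → Option V) (α : V → D)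

theorem bindAsg_empty : bindAsg β ∅ α = fun _ => none := by
  funext a
  cases β a <;> simp [bindAsg]

theorem bindAsg_eq_none {W : Set V} {x : V} (hx : x ∉ W) {a : Arg} (ha : β a = some x) :
    bindAsg β W α a = none := by
  simp [bindAsg, ha, hx]

theorem bindAsg_eq_map {W : Set V} (hW : ∀ a v, β a = some v → v ∈ W) :
    bindAsg β W α = fun a => (β a).map α := by
  funext a
  cases hb : β a with
  | none => simp [bindAsg, hb]
  | some v => simp [bindAsg, hb, hW a v hb]

theorem extAsg_bindAsg [DecidableEq V] (W : Set V) (x : V) (d : D) :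
    extAsg (bindAsg β W α) {a | β a = some x} d
      = bindAsg β (insert x W) (Function.update α x d) := by
  funext a
  cases hb : β a with
  | none => simp [extAsg, bindAsg, hb]
  | some v =>
    by_cases hvx : v = x
    · simp [extAsg, bindAsg, hb, hvx]
    · by_cases hvW : v ∈ W <;> simp [extAsg, bindAsg, hb, hvx, hvW]

end bindAsg

theorem evalPrefix_cons_iff_of_forth_back {V D₁ D₂ : Type*} [DecidableEq V]
    {S₁ : (V → D₁) → Prop} {S₂ : (V → D₂) → Prop} {b : Bool} {x : V} {Q : QPrefix V}
    {α₁ : V → D₁} {α₂ : V → D₂} {T : D₁ → D₂ → Prop}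
    (forth : ∀ d₁, ∃ d₂, T d₁ d₂) (back : ∀ d₂, ∃ d₁, T d₁ d₂)
    (h : ∀ d₁ d₂, T d₁ d₂ →
      (evalPrefix S₁ Q (Function.update α₁ x d₁) ↔ evalPrefix S₂ Q (Function.update α₂ x d₂))) :
    evalPrefix S₁ ((b, x) :: Q) α₁ ↔ evalPrefix S₂ ((b, x) :: Q) α₂ := by
  cases b
  · refine ⟨fun h₁ d₂ => ?_, fun h₂ d₁ => ?_⟩
    · obtain ⟨d₁, hT⟩ := back d₂
      exact (h d₁ d₂ hT).1 (h₁ d₁)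
    · obtain ⟨d₂, hT⟩ := forth d₁
      exact (h d₁ d₂ hT).2 (h₂ d₂)
  · refine ⟨fun ⟨d₁, h₁⟩ => ?_, fun ⟨d₂, h₂⟩ => ?_⟩
    · obtain ⟨d₂, hT⟩ := forth d₁
      exact ⟨d₂, (h d₁ d₂ hT).1 h₁⟩
    · obtain ⟨d₁, hT⟩ := back d₂
      exact ⟨d₁, (h d₁ d₂ hT).2 h₂⟩

theorem evalPrefix_iff_of_oneBindingBisim {Arg V Rel D₁ D₂ : Type*} [DecidableEq V]
    {arg : Rel → Set Arg}
    {interp₁ : Rel → Set (Arg → Option D₁)} {interp₂ : Rel → Set (Arg → Option D₂)}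
    {R : (Arg → Option D₁) → (Arg → Option D₂) → Prop}
    (hR : OneBindingBisim arg interp₁ interp₂ R)
    {r : Rel} {β : Arg → Option V} (hβdom : ∀ a, (β a).isSome ↔ a ∈ arg r)
    (Q : QPrefix V) (W : Set V) (hnodup : (Q.map Prod.snd).Nodup)
    (hdisj : ∀ v ∈ Q.map Prod.snd, v ∉ W)
    (hcov : ∀ a v, β a = some v → v ∈ W ∨ v ∈ Q.map Prod.snd)
    (α₁ : V → D₁) (α₂ : V → D₂) (hα : R (bindAsg β W α₁) (bindAsg β W α₂)) :
    evalPrefix (fun α => (fun a => (β a).map α) ∈ interp₁ r) Q α₁ ↔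
      evalPrefix (fun α => (fun a => (β a).map α) ∈ interp₂ r) Q α₂ := by
  induction Q generalizing W α₁ α₂ with
  | nil =>
    have hW : ∀ a v, β a = some v → v ∈ W := fun a v hb =>
      (hcov a v hb).resolve_right List.not_mem_nil
    rw [bindAsg_eq_map β α₁ hW, bindAsg_eq_map β α₂ hW] at hα
    exact hR.2.2.2 r _ _ hα fun a => by rw [Option.isSome_map]; exact hβdom a
  | cons p Q ih =>
    obtain ⟨b, x⟩ := p
    rw [List.map_cons, List.nodup_cons] at hnodup
    obtain ⟨hxQ, hnodup⟩ := hnodup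
    have hxW : x ∉ W := hdisj x List.mem_cons_self
    obtain ⟨forth, back⟩ :=
      hR.2.2.1 _ _ {a | β a = some x} hα fun a ha => bindAsg_eq_none β α₁ hxW ha
    refine evalPrefix_cons_iff_of_forth_back forth back fun d₁ d₂ hd => ?_
    rw [extAsg_bindAsg, extAsg_bindAsg] at hd
    refine ih (insert x W) hnodup ?_ ?_ _ _ hd
    · intro v hv
      simp only [Set.mem_insert_iff, not_or]
      exact ⟨ne_of_mem_of_not_mem hv hxQ, hdisj v (List.mem_cons_of_mem _ hv)⟩
    · intro a v hb
      have := hcov a v hb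
      simp only [List.map_cons, List.mem_cons, Set.mem_insert_iff] at this ⊢
      tauto

/-- One-binding bisimilar structures satisfy the same one-binding sentences
`Q β r` (atomic one-binding sentences). -/
theorem stmt_7 {Arg V Rel D₁ D₂ : Type*} [DecidableEq V]
    (arg : Rel → Set Arg)
    (interp₁ : Rel → Set (Arg → Option D₁)) (interp₂ : Rel → Set (Arg → Option D₂))
    (R : (Arg → Option D₁) → (Arg → Option D₂) → Prop)
    (hR : OneBindingBisim arg interp₁ interp₂ R)
    (r : Rel) (Q : QPrefix V) (hnodup : (Q.map Prod.snd).Nodup)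
    (β : Arg → Option V)
    (hβdom : ∀ a, (β a).isSome ↔ a ∈ arg r)
    (hβQ : ∀ a v, β a = some v → ∃ b, (b, v) ∈ Q)
    (α₁ : V → D₁) (α₂ : V → D₂) :
    evalPrefix (fun α => (fun a => (β a).map α) ∈ interp₁ r) Q α₁ ↔
      evalPrefix (fun α => (fun a => (β a).map α) ∈ interp₂ r) Q α₂ := by
  have hempty : R (bindAsg β ∅ α₁) (bindAsg β ∅ α₂) := by
    rw [bindAsg_empty, bindAsg_empty]
    exact hR.1
  refine evalPrefix_iff_of_oneBindingBisim hR hβdom Q ∅ hnodup (fun _ _ => id) ?_ α₁ α₂ hempty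
  intro a v hb
  obtain ⟨b, hbv⟩ := hβQ a v hb
  exact Or.inr (List.mem_map_of_mem (f := Prod.snd) hbv)
end
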